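/- Let G be the directed m-cycle, Y, Ỹ ∈ ℝ^{n×V}, S = range(Y I_E), and A = Y A_{k=1} Ỹᵀ. Then the following are equivalent: (i) for all edge labels k ∈ ℝ^E_+ and all complex-balanced equilibria x* ∈ Z_k, the Jacobian J(x*) is stable on S; (ii) A is D-stable on S, i.e., AD is stable on S for every D ∈ 𝒟₊. -/

import Mathlib

open Matrix Polynomial Filter Topology

noncomputable section

/-- `D ∈ 𝒟₊`: a diagonal matrix with positive diagonal entries. -/
def IsPosDiag {n : ℕ} (D : Matrix (Fin n) (Fin n) ℝ) : Prop :=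
  ∃ d : Fin n → ℝ, (∀ i, 0 < d i) ∧ D = Matrix.diagonal d

/-- A real square matrix is stable if every root in `ℂ` of its characteristic
polynomial has negative real part. -/
def IsStableMat {n : ℕ} (A : Matrix (Fin n) (Fin n) ℝ) : Prop :=
  ∀ z : ℂ, (A.charpoly.map (algebraMap ℝ ℂ)).IsRoot z → z.re < 0

/-- A real square matrix is semistable if every root in `ℂ` of its characteristic
polynomial has non-positive real part. -/
def IsSemistableMat {n : ℕ} (A : Matrix (Fin n) (Fin n) ℝ) : Prop :=
  ∀ z : ℂ, (A.charpoly.map (algebraMap ℝ ℂ)).IsRoot z → z.re ≤ 0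

/-- The restriction `A|_S : S → S` of a matrix whose range is contained in `S`. -/
def restrictedMap {n : ℕ} (A : Matrix (Fin n) (Fin n) ℝ) (S : Submodule ℝ (Fin n → ℝ))
    (h : ∀ v, A.mulVec v ∈ S) : S →ₗ[ℝ] S :=
  A.mulVecLin.restrict (p := S) (q := S) (fun x _ => by simpa using h x)

/-- `A` is stable on `S`: `range A ⊆ S` and every eigenvalue over `ℂ` (root of the
characteristic polynomial) of `A|_S : S → S` has negative real part. -/
def IsStableOn {n : ℕ} (A : Matrix (Fin n) (Fin n) ℝ) (S : Submodule ℝ (Fin n → ℝ)) : Prop :=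
  ∃ h : ∀ v, A.mulVec v ∈ S,
    ∀ z : ℂ, (((restrictedMap A S h).charpoly).map (algebraMap ℝ ℂ)).IsRoot z → z.re < 0

/-- `A` is semistable on `S`: `range A ⊆ S` and every eigenvalue over `ℂ` of
`A|_S : S → S` has non-positive real part. -/
def IsSemistableOn {n : ℕ} (A : Matrix (Fin n) (Fin n) ℝ) (S : Submodule ℝ (Fin n → ℝ)) : Prop :=
  ∃ h : ∀ v, A.mulVec v ∈ S,
    ∀ z : ℂ, (((restrictedMap A S h).charpoly).map (algebraMap ℝ ℂ)).IsRoot z → z.re ≤ 0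

/-- `M < 0` on `S`. -/
def NegDefOn {n : ℕ} (M : Matrix (Fin n) (Fin n) ℝ) (S : Submodule ℝ (Fin n → ℝ)) : Prop :=
  ∀ x ∈ S, x ≠ 0 → x ⬝ᵥ M.mulVec x < 0

/-- `M ≤ 0` on `S`. -/
def NegSemidefOn {n : ℕ} (M : Matrix (Fin n) (Fin n) ℝ) (S : Submodule ℝ (Fin n → ℝ)) : Prop :=
  ∀ x ∈ S, x ⬝ᵥ M.mulVec x ≤ 0

/-- `M > 0` on `S`. -/
def PosDefOn {n : ℕ} (M : Matrix (Fin n) (Fin n) ℝ) (S : Submodule ℝ (Fin n → ℝ)) : Prop :=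
  ∀ x ∈ S, x ≠ 0 → 0 < x ⬝ᵥ M.mulVec x

/-- The Laplacian matrix `A_k` of the labeled digraph `(V,E)` with edge labels `k`:
`(A_k)_{i',i} = k_{i→i'}` if `(i→i') ∈ E`, `(A_k)_{i,i} = -∑_{(i→i')∈E} k_{i→i'}`,
and `0` otherwise (the graph has no self-loops). -/
def laplacian {m : ℕ} (E : Finset (Fin m × Fin m)) (k : Fin m × Fin m → ℝ) :
    Matrix (Fin m) (Fin m) ℝ :=
  fun i' i => (if (i, i') ∈ E then k (i, i') else 0)
    - (if i' = i then ∑ e ∈ E.filter (fun e => e.1 = i), k e else 0)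

/-- The incidence matrix `I_E ∈ ℝ^{V×E}`, with column `e_{i'} - e_i` for each edge `(i→i')`. -/
def incidence {m : ℕ} (E : Finset (Fin m × Fin m)) :
    Matrix (Fin m) {e : Fin m × Fin m // e ∈ E} ℝ :=
  fun i e => (if (e : Fin m × Fin m).2 = i then (1 : ℝ) else 0)
    - (if (e : Fin m × Fin m).1 = i then 1 else 0)

/-- `x^Ỹ ∈ ℝ^V`, defined by `(x^Ỹ)_j = ∏_i x_i ^ (Ỹ)_{ij}` (real exponents). -/
def powVec {n m : ℕ} (x : Fin n → ℝ) (Yt : Matrix (Fin n) (Fin m) ℝ) : Fin m → ℝ :=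
  fun j => ∏ i, (x i) ^ (Yt i j)

/-- The digraph `(V,E)` is weakly reversible: every connected component is strongly
connected, i.e. whenever `a` and `b` are connected by an undirected path, there is a
directed path from `a` to `b`. -/
def WeaklyReversible {m : ℕ} (E : Finset (Fin m × Fin m)) : Prop :=
  ∀ a b : Fin m,
    Relation.ReflTransGen (fun u v => (u, v) ∈ E ∨ (v, u) ∈ E) a b →
    Relation.ReflTransGen (fun u v => (u, v) ∈ E) a b

/-- The stoichiometric subspace `S = range (Y I_E)`. -/
def stoichSubspace {n m : ℕ} (Y : Matrix (Fin n) (Fin m) ℝ) (E : Finset (Fin m × Fin m)) :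
    Submodule ℝ (Fin n → ℝ) :=
  LinearMap.range (Y * incidence E).mulVecLin

/-- The Jacobian matrix `J(x) = Y A_k diag(x^Ỹ) Ỹᵀ diag(x⁻¹)` of `x ↦ Y A_k x^Ỹ`. -/
def jacobianMat {n m : ℕ} (E : Finset (Fin m × Fin m)) (k : Fin m × Fin m → ℝ)
    (Y Yt : Matrix (Fin n) (Fin m) ℝ) (x : Fin n → ℝ) : Matrix (Fin n) (Fin n) ℝ :=
  Y * laplacian E k * Matrix.diagonal (powVec x Yt) * Ytᵀ * Matrix.diagonal (fun i => (x i)⁻¹)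

/-- `C` is (the edge set of) a cycle: `{i_1→i_2, …, i_{r-1}→i_r, i_r→i_1}` with
pairwise distinct vertices `i_1, …, i_r` (and `r ≥ 2`). -/
def IsCycleEdges {m : ℕ} (C : Finset (Fin m × Fin m)) : Prop :=
  ∃ (r : ℕ) (f : Fin (r + 2) → Fin m), Function.Injective f ∧
    C = Finset.image (fun j => (f j, f (j + 1))) Finset.univ

/-- The edge set of the directed `m`-cycle `1 → 2 → ⋯ → m → 1`. -/
def cycleEdges (m : ℕ) [NeZero m] : Finset (Fin m × Fin m) :=
  Finset.image (fun i : Fin m => (i, i + 1)) Finset.univ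

end

section Stmt12Aux

lemma mem_cycleEdges {m : ℕ} [NeZero m] (a b : Fin m) :
    (a, b) ∈ cycleEdges m ↔ b = a + 1 := by
  simp only [cycleEdges, Finset.mem_image, Finset.mem_univ, true_and, Prod.mk.injEq]
  constructor
  · rintro ⟨i, rfl, rfl⟩; rfl
  · rintro rfl; exact ⟨a, rfl, rfl⟩

lemma filter_fst_cycle {m : ℕ} [NeZero m] (i : Fin m) :
    (cycleEdges m).filter (fun e => e.1 = i) = {(i, i + 1)} := by
  ext ⟨a, b⟩
  simp only [Finset.mem_filter, mem_cycleEdges, Finset.mem_singleton, Prod.mk.injEq]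
  constructor
  · rintro ⟨rfl, rfl⟩; exact ⟨rfl, rfl⟩
  · rintro ⟨rfl, rfl⟩; exact ⟨rfl, rfl⟩

lemma laplacian_mul_diagonal {m : ℕ} (E : Finset (Fin m × Fin m))
    (k : Fin m × Fin m → ℝ) (v : Fin m → ℝ) :
    laplacian E k * Matrix.diagonal v = laplacian E (fun e => k e * v e.1) := by
  ext i' i
  rw [Matrix.mul_diagonal]
  simp only [laplacian, sub_mul, ite_mul, zero_mul, Finset.sum_mul]
  congr 1
  split_ifs with h
  · exact Finset.sum_congr rfl fun e he => by
      rw [(Finset.mem_filter.mp he).2]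
  · rfl

lemma laplacian_congr {m : ℕ} (E : Finset (Fin m × Fin m))
    {k k' : Fin m × Fin m → ℝ} (h : ∀ e ∈ E, k e = k' e) :
    laplacian E k = laplacian E k' := by
  ext i' i
  simp only [laplacian]
  congr 1
  · split_ifs with hmem
    · exact h _ hmem
    · rfl
  · split_ifs with hd
    · exact Finset.sum_congr rfl fun e he => h _ (Finset.mem_filter.mp he).1
    · rfl

lemma laplacian_const {m : ℕ} (E : Finset (Fin m × Fin m)) (c : ℝ) :
    laplacian E (fun _ => c) = c • laplacian E (fun _ => 1) := by
  ext i' i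
  simp [laplacian, mul_sub, Finset.mul_sum, mul_ite, mul_comm]

lemma cycle_mulVec {m : ℕ} [NeZero m] (k : Fin m × Fin m → ℝ) (v : Fin m → ℝ) :
    (laplacian (cycleEdges m) k).mulVec v
      = fun i => k (i - 1, i) * v (i - 1) - k (i, i + 1) * v i := by
  funext i
  simp only [Matrix.mulVec, dotProduct, laplacian, sub_mul, ite_mul, zero_mul,
    Finset.sum_sub_distrib]
  congr 1
  · have h1 : ∀ j : Fin m, ((j, i) ∈ cycleEdges m) ↔ j = i - 1 := by
      intro j
      rw [mem_cycleEdges]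
      constructor
      · rintro rfl; rw [add_sub_cancel_right]
      · rintro rfl; rw [sub_add_cancel]
    rw [Finset.sum_congr rfl fun j _ => if_congr (h1 j) rfl rfl,
      Finset.sum_ite_eq' Finset.univ (i - 1) (fun j => k (j, i) * v j),
      if_pos (Finset.mem_univ _)]
  · rw [Finset.sum_ite_eq Finset.univ i (fun j =>
      (∑ e ∈ (cycleEdges m).filter (fun e => e.1 = j), k e) * v j),
      if_pos (Finset.mem_univ _), filter_fst_cycle, Finset.sum_singleton]

lemma jacobian_eq {n m : ℕ} (E : Finset (Fin m × Fin m)) (k : Fin m × Fin m → ℝ)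
    (Y Yt : Matrix (Fin n) (Fin m) ℝ) (x : Fin n → ℝ) :
    jacobianMat E k Y Yt x
      = Y * laplacian E (fun e => k e * powVec x Yt e.1) * Ytᵀ
          * Matrix.diagonal (fun i => (x i)⁻¹) := by
  unfold jacobianMat
  rw [Matrix.mul_assoc Y (laplacian E k), laplacian_mul_diagonal]

lemma powVec_pos {n m : ℕ} {x : Fin n → ℝ} (hx : ∀ i, 0 < x i)
    (Yt : Matrix (Fin n) (Fin m) ℝ) (j : Fin m) : 0 < powVec x Yt j := by
  unfold powVec
  exact Finset.prod_pos fun i _ => Real.rpow_pos_of_pos (hx i) _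

end Stmt12Aux

/-- for the directed `m`-cycle, all complex-balanced equilibria are linearly
stable (for all rate constants) iff `A = Y A_{k=1} Ỹᵀ` is D-stable on `S`. -/
theorem stmt12 {n : ℕ} (m : ℕ) [NeZero m] (hm : 2 ≤ m)
    (Y Yt : Matrix (Fin n) (Fin m) ℝ) :
    (∀ k : Fin m × Fin m → ℝ, (∀ e ∈ cycleEdges m, 0 < k e) →
      ∀ x : Fin n → ℝ, (∀ i, 0 < x i) →
        (laplacian (cycleEdges m) k).mulVec (powVec x Yt) = 0 →
        IsStableOn (jacobianMat (cycleEdges m) k Y Yt x) (stoichSubspace Y (cycleEdges m))) ↔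
    (∀ D, IsPosDiag D →
      IsStableOn (Y * laplacian (cycleEdges m) (fun _ => 1) * Ytᵀ * D)
        (stoichSubspace Y (cycleEdges m))) := by
  constructor
  · -- all equilibria stable → D-stable
    intro H D hD
    obtain ⟨d, hd, rfl⟩ := hD
    set x : Fin n → ℝ := fun i => (d i)⁻¹ with hxdef
    have hx : ∀ i, 0 < x i := fun i => inv_pos.mpr (hd i)
    have hpv : ∀ j, 0 < powVec x Yt j := powVec_pos hx Yt
    set k : Fin m × Fin m → ℝ := fun e => (powVec x Yt e.1)⁻¹ with hkdef
    have hk : ∀ e ∈ cycleEdges m, 0 < k e := fun e _ => inv_pos.mpr (hpv e.1)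
    have heq : (laplacian (cycleEdges m) k).mulVec (powVec x Yt) = 0 := by
      rw [cycle_mulVec]
      funext i
      simp only [hkdef, Pi.zero_apply]
      rw [inv_mul_cancel₀ (hpv _).ne', inv_mul_cancel₀ (hpv _).ne', sub_self]
    have hjac : jacobianMat (cycleEdges m) k Y Yt x
        = Y * laplacian (cycleEdges m) (fun _ => 1) * Ytᵀ * Matrix.diagonal d := by
      rw [jacobian_eq]
      have h1 : (fun e : Fin m × Fin m => k e * powVec x Yt e.1) = fun _ => (1 : ℝ) := by
        funext e
        exact inv_mul_cancel₀ (hpv e.1).ne'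
      have h2 : (fun i => (x i)⁻¹) = d := by
        funext i
        simp [hxdef]
      rw [h1, h2]
    have := H k hk x hx heq
    rwa [hjac] at this
  · -- D-stable → all equilibria stable
    intro H k hk x hx heq
    have hpv : ∀ j, 0 < powVec x Yt j := powVec_pos hx Yt
    set g : Fin m → ℝ := fun i => k (i, i + 1) * powVec x Yt i with hgdef
    have hg : ∀ i : Fin m, g (i - 1) = g i := by
      intro i
      rw [cycle_mulVec] at heq
      have h0 := congrFun heq i
      simp only [Pi.zero_apply, sub_eq_zero] at h0
      simp only [hgdef]
      rw [sub_add_cancel]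
      exact h0
    have step : ∀ i : Fin m, g (i + 1) = g i := by
      intro i
      have := hg (i + 1)
      rw [add_sub_cancel_right] at this
      exact this.symm
    open Fin.NatCast in
    have hnat : ∀ j : ℕ, g (j : Fin m) = g 0 := by
      intro j
      induction j with
      | zero => simp
      | succ j ih => rw [Nat.cast_add, Nat.cast_one, step, ih]
    open Fin.NatCast in
    have hconst : ∀ i : Fin m, g i = g 0 := by
      intro i
      have := hnat i.val
      rwa [Fin.cast_val_eq_self] at this
    have hc : 0 < g 0 := by
      have hmem : ((0 : Fin m), (0 : Fin m) + 1) ∈ cycleEdges m :=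
        (mem_cycleEdges _ _).mpr rfl
      exact mul_pos (hk _ hmem) (hpv 0)
    have hcongr : laplacian (cycleEdges m) (fun e => k e * powVec x Yt e.1)
        = laplacian (cycleEdges m) (fun _ => g 0) := by
      apply laplacian_congr
      rintro ⟨a, b⟩ hmem
      rw [mem_cycleEdges] at hmem
      subst hmem
      exact hconst a
    have hjac : jacobianMat (cycleEdges m) k Y Yt x
        = Y * laplacian (cycleEdges m) (fun _ => 1) * Ytᵀ
            * Matrix.diagonal (fun i => g 0 * (x i)⁻¹) := by
      rw [jacobian_eq, hcongr, laplacian_const]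
      have hdiag : Matrix.diagonal (fun i => g 0 * (x i)⁻¹)
          = g 0 • Matrix.diagonal (fun i : Fin n => (x i)⁻¹) := by
        rw [← Matrix.diagonal_smul]
        rfl
      rw [hdiag]
      simp only [Matrix.mul_smul, Matrix.smul_mul]
    rw [hjac]
    exact H _ ⟨fun i => g 0 * (x i)⁻¹,
      fun i => mul_pos hc (inv_pos.mpr (hx i)), rfl⟩
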